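/- Fix integers n and k with n/2 < k ≤ n, and let X₁, X₂, … be i.i.d. uniform on [n] = {1,…,n}. Fix i ∈ [n], let τ_i be the least r ≥ 1 with X_r = i, and let W_k be the least r ≥ 1 such that |{X₁,…,X_r}| ≥ k. Then E[min(τ_i, W_k)] = k. -/

import Mathlib

/-!
The retrieval time `T = min(τ_i, W_k)` satisfies `E[T] = ∑_{r ≥ 0} P(T > r)`, and `T > r` means
that the first `r` draws avoid `i` and show fewer than `k` distinct values. Splitting according
to the exact number `d < k` of values shown, `E[T]` is the sum over `d < k` of the expected
number of times `r` at which the first `r` draws avoid `i` and show exactly `d` values. Each of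
these equals `1`: from `d` values the walk stays put with probability `d/n`, so it spends
`n/(n-d)` steps there on average, and it reaches `d` values before hitting `i` with probability
`∏_{j<d} (n-1-j)/(n-j) = (n-d)/n`. In generating-function form, the series
`G(d) = ∑_r #{a : [r] → [n] \ {i} taking exactly d values} · n^(-r)` satisfy
`G(0) = 1` and `G(d+1) = (d+1)/n · G(d+1) + (n-1-d)/n · G(d)`, which forces `G(d) = 1`.
-/

open MeasureTheory Finset
open scoped ENNReal

/-- The first time `r ≥ 1` (as an element of `[0,∞]`, with value `∞` if there is no such time)
at which the condition `cond r ω` holds. -/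
noncomputable def firstTime {Ω : Type*} (cond : ℕ → Ω → Prop) (ω : Ω) : ℝ≥0∞ :=
  sInf {x : ℝ≥0∞ | ∃ r : ℕ, x = (r : ℝ≥0∞) ∧ 1 ≤ r ∧ cond r ω}

lemma ENNReal.eq_one_of_eq_mul_add {a b x : ℝ≥0∞} (hx : x ≠ ∞) (ha : a ≠ 1) (hab : a + b = 1)
    (h : x = a * x + b) : x = 1 := by
  have ha' : a ≠ ∞ := ne_top_of_le_ne_top one_ne_top (hab ▸ le_self_add)
  have hb' : b ≠ ∞ := ne_top_of_le_ne_top one_ne_top (hab ▸ le_add_self)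
  lift x to NNReal using hx
  lift a to NNReal using ha'
  lift b to NNReal using hb'
  norm_cast at *
  have key : ((x : ℝ) - 1) * (1 - a) = 0 := by
    have h' := congrArg NNReal.toReal h
    have hab' := congrArg NNReal.toReal hab
    push_cast at h' hab'
    linear_combination h' + hab'
  rcases mul_eq_zero.mp key with hx1 | ha1
  · exact NNReal.coe_eq_one.mp (by linarith)
  · exact absurd (NNReal.coe_eq_one.mp (by linarith)) ha

lemma ENNReal.natCast_mul_inv_lt_one {m n : ℕ} (h : m < n) : (m : ℝ≥0∞) * (n : ℝ≥0∞)⁻¹ < 1 := by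
  rw [← div_eq_mul_inv, ENNReal.div_lt_iff (Or.inl (Nat.cast_ne_zero.mpr (by omega)))
    (Or.inl (natCast_ne_top n)), one_mul]
  exact_mod_cast h

section FirstTime

variable {Ω : Type*}

lemma min_firstTime (c₁ c₂ : ℕ → Ω → Prop) (ω : Ω) :
    min (firstTime c₁ ω) (firstTime c₂ ω) = firstTime (fun r ω => c₁ r ω ∨ c₂ r ω) ω := by
  rw [firstTime, firstTime, firstTime, ← sInf_union]
  congr 1
  ext x
  simp only [Set.mem_union, Set.mem_ofPred_eq]
  constructor
  · rintro (⟨r, rfl, hr, hc⟩ | ⟨r, rfl, hr, hc⟩)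
    · exact ⟨r, rfl, hr, Or.inl hc⟩
    · exact ⟨r, rfl, hr, Or.inr hc⟩
  · rintro ⟨r, rfl, hr, hc | hc⟩
    · exact Or.inl ⟨r, rfl, hr, hc⟩
    · exact Or.inr ⟨r, rfl, hr, hc⟩

lemma firstTime_eq_encard {cond : ℕ → Ω → Prop} {ω : Ω} (hmono : Monotone (cond · ω))
    (h₀ : ¬ cond 0 ω) : firstTime cond ω = ({r | ¬ cond r ω}.encard : ℝ≥0∞) := by
  classical
  by_cases hex : ∃ m, cond m ω
  · have hm₀ : Nat.find hex ≠ 0 := fun h => h₀ (h ▸ Nat.find_spec hex)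
    have hIio : {r | ¬ cond r ω} = Set.Iio (Nat.find hex) := by
      ext r
      simp only [Set.mem_ofPred_eq, Set.mem_Iio]
      exact ⟨fun h => not_le.mp fun hle => h (hmono hle (Nat.find_spec hex)),
        Nat.find_min hex⟩
    rw [hIio, ← Finset.coe_range, Set.encard_coe_eq_coe_finsetCard, card_range]
    refine le_antisymm (sInf_le ⟨_, rfl, Nat.one_le_iff_ne_zero.mpr hm₀, Nat.find_spec hex⟩)
      (le_sInf ?_)
    rintro x ⟨r, rfl, -, hr⟩
    exact_mod_cast Nat.find_min' hex hr
  · push Not at hex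
    simp [firstTime, hex]

variable [MeasurableSpace Ω]

lemma lintegral_firstTime (μ : Measure Ω) {cond : ℕ → Ω → Prop}
    (hmono : ∀ ω, Monotone (cond · ω)) (h₀ : ∀ ω, ¬ cond 0 ω)
    (hmeas : ∀ r, MeasurableSet {ω | cond r ω}) :
    ∫⁻ ω, firstTime cond ω ∂μ = ∑' r, μ {ω | ¬ cond r ω} := by
  have hsum : ∀ ω, firstTime cond ω = ∑' r, {ω | ¬ cond r ω}.indicator 1 ω := by
    intro ω
    rw [firstTime_eq_encard (hmono ω) (h₀ ω), ← ENNReal.tsum_set_one]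
    exact (_root_.tsum_subtype _ fun _ => 1).trans <|
      tsum_congr fun r => by by_cases h : cond r ω <;> simp [h]
  have hmeas' : ∀ r, MeasurableSet {ω | ¬ cond r ω} := fun r => (hmeas r).compl
  simp_rw [hsum]
  rw [lintegral_tsum (f := fun r => {ω | ¬ cond r ω}.indicator 1)
    fun r => (measurable_const.indicator (hmeas' r)).aemeasurable]
  simp_rw [lintegral_indicator_one (hmeas' _)]

end FirstTime

section Prefix

variable {β : Type*} [MeasurableSpace β] {m : ℕ}

lemma measurable_prefix : Measurable fun (ω : ℕ → β) (j : Fin m) => ω j :=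
  measurable_pi_lambda _ fun _ => measurable_pi_apply _

lemma measurableSet_setOf_prefix_mem [Countable β] [MeasurableSingletonClass β]
    (B : Set (Fin m → β)) : MeasurableSet {ω : ℕ → β | (fun j : Fin m => ω j) ∈ B} :=
  measurable_prefix B.to_countable.measurableSet

lemma measure_setOf_prefix_mem [MeasurableSingletonClass β] (μ : Measure (ℕ → β)) {c : ℝ≥0∞}
    (hμ : ∀ a : Fin m → β, μ {ω | ∀ j : Fin m, ω j = a j} = c) (B : Finset (Fin m → β)) :
    μ {ω | (fun j : Fin m => ω j) ∈ B} = #B * c := by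
  calc μ {ω | (fun j : Fin m => ω j) ∈ B}
      = μ.map (fun ω (j : Fin m) => ω j) B :=
        (Measure.map_apply measurable_prefix B.measurableSet).symm
    _ = ∑ a ∈ B, μ.map (fun ω (j : Fin m) => ω j) {a} := sum_measure_singleton.symm
    _ = ∑ a ∈ B, c := sum_congr rfl fun a _ => by
      rw [Measure.map_apply measurable_prefix (measurableSet_singleton a), ← hμ a]
      congr 1
      ext ω
      simp [funext_iff]
    _ = #B * c := by simp

end Prefix

section Tuples

variable {α : Type*} [DecidableEq α]

lemma card_filter_card_insert_eq {s t : Finset α} (hts : t ⊆ s) (c : ℕ) :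
    #{v ∈ s | #(insert v t) = c} =
      (if #t = c then #t else 0) + (if #t + 1 = c then #s - #t else 0) := by
  have hin : {v ∈ t | #(insert v t) = c} = {v ∈ t | #t = c} :=
    filter_congr fun v hv => by rw [insert_eq_of_mem hv]
  have hout : {v ∈ s \ t | #(insert v t) = c} = {v ∈ s \ t | #t + 1 = c} :=
    filter_congr fun v hv => by rw [card_insert_of_notMem (mem_sdiff.mp hv).2]
  rw [← union_sdiff_of_subset hts, filter_union, card_union_of_disjoint
    (disjoint_sdiff.mono (filter_subset _ _) (filter_subset _ _)), hin, hout, filter_const,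
    filter_const, union_sdiff_of_subset hts]
  split_ifs <;> simp [card_sdiff_of_subset hts]

lemma image_univ_fin_cons {r : ℕ} (v : α) (b : Fin r → α) :
    univ.image (Fin.cons v b : Fin (r + 1) → α) = insert v (univ.image b) := by
  ext x
  simp [Fin.exists_fin_succ, eq_comm]

def tuplesOfImageCard (s : Finset α) (r d : ℕ) : Finset (Fin r → α) :=
  {a ∈ Fintype.piFinset fun _ => s | #(univ.image a) = d}

lemma card_tuplesOfImageCard_succ (s : Finset α) (r d : ℕ) :
    #(tuplesOfImageCard s (r + 1) d) =
      ∑ b ∈ Fintype.piFinset (fun _ : Fin r => s), #{v ∈ s | #(insert v (univ.image b)) = d} := by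
  have hpi : Fintype.piFinset (fun _ : Fin (r + 1) => s) =
      (s ×ˢ Fintype.piFinset fun _ : Fin r => s).map (Fin.consEquiv fun _ => α).toEmbedding := by
    have := filter_piFinset_eq_map_consEquiv (fun _ : Fin (r + 1) => s) fun _ => True
    simp only [filter_true] at this
    exact this
  rw [tuplesOfImageCard, hpi, filter_map, card_map, card_filter, sum_product_right]
  refine sum_congr rfl fun b _ => ?_
  rw [card_filter]
  exact sum_congr rfl fun v _ => by rw [← image_univ_fin_cons]; rfl

lemma card_tuplesOfImageCard_succ_succ (s : Finset α) (r d : ℕ) :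
    #(tuplesOfImageCard s (r + 1) (d + 1)) =
      (d + 1) * #(tuplesOfImageCard s r (d + 1)) + (#s - d) * #(tuplesOfImageCard s r d) := by
  rw [card_tuplesOfImageCard_succ]
  have hfiber : ∀ b ∈ Fintype.piFinset (fun _ : Fin r => s),
      #{v ∈ s | #(insert v (univ.image b)) = d + 1} =
        (if #(univ.image b) = d + 1 then d + 1 else 0) +
          (if #(univ.image b) = d then #s - d else 0) := by
    intro b hb
    have himage : univ.image b ⊆ s := by
      simpa [image_subset_iff] using Fintype.mem_piFinset.mp hb
    rw [card_filter_card_insert_eq himage]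
    split_ifs <;> omega
  rw [sum_congr rfl hfiber, sum_add_distrib, ← sum_filter, ← sum_filter, sum_const, sum_const,
    smul_eq_mul, smul_eq_mul, mul_comm, mul_comm (#s - d)]
  rfl

lemma card_tuplesOfImageCard_zero (s : Finset α) (d : ℕ) :
    #(tuplesOfImageCard s 0 d) = if d = 0 then 1 else 0 := by
  split_ifs with hd <;> simp [tuplesOfImageCard, hd, eq_comm]

lemma tuplesOfImageCard_succ_zero (s : Finset α) (r : ℕ) : tuplesOfImageCard s (r + 1) 0 = ∅ :=
  filter_false_of_mem fun a _ => by simp [image_eq_empty, univ_nonempty.ne_empty]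

lemma card_tuplesOfImageCard_le (s : Finset α) (r d : ℕ) : #(tuplesOfImageCard s r d) ≤ #s ^ r :=
  (card_filter_le _ _).trans (by simp)

lemma card_filter_card_image_lt (s : Finset α) (r k : ℕ) :
    #{a ∈ Fintype.piFinset (fun _ : Fin r => s) | #(univ.image a) < k} =
      ∑ d ∈ range k, #(tuplesOfImageCard s r d) := by
  rw [card_eq_sum_card_fiberwise (f := fun a => #(univ.image a)) (t := range k)
    fun a ha => mem_range.mpr (mem_filter.mp ha).2]
  refine sum_congr rfl fun d hd => ?_
  rw [tuplesOfImageCard, filter_filter]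
  exact congrArg card <| filter_congr fun a _ =>
    ⟨And.right, fun h => ⟨h.trans_lt (mem_range.mp hd), h⟩⟩

noncomputable def imageCardSeries (s : Finset α) (d : ℕ) : ℝ≥0∞ :=
  ∑' r, (#(tuplesOfImageCard s r d) : ℝ≥0∞) * ((#s + 1 : ℕ) : ℝ≥0∞)⁻¹ ^ r

lemma imageCardSeries_ne_top (s : Finset α) (d : ℕ) : imageCardSeries s d ≠ ∞ := by
  refine ne_top_of_le_ne_top (tsum_geometric_lt_top.mpr
    (ENNReal.natCast_mul_inv_lt_one (Nat.lt_succ_self #s))).ne ?_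
  refine ENNReal.tsum_le_tsum fun r => ?_
  rw [mul_pow]
  gcongr
  exact_mod_cast card_tuplesOfImageCard_le s r d

lemma imageCardSeries_zero (s : Finset α) : imageCardSeries s 0 = 1 := by
  rw [imageCardSeries, tsum_eq_single 0 fun r hr => ?_]
  · simp [card_tuplesOfImageCard_zero]
  · obtain ⟨r, rfl⟩ := Nat.exists_eq_succ_of_ne_zero hr
    simp [tuplesOfImageCard_succ_zero]

lemma imageCardSeries_succ (s : Finset α) (d : ℕ) :
    imageCardSeries s (d + 1) =
      (d + 1 : ℕ) * ((#s + 1 : ℕ) : ℝ≥0∞)⁻¹ * imageCardSeries s (d + 1) +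
        (#s - d : ℕ) * ((#s + 1 : ℕ) : ℝ≥0∞)⁻¹ * imageCardSeries s d := by
  rw [imageCardSeries, imageCardSeries]
  conv_lhs => rw [tsum_eq_zero_add' ENNReal.summable]
  rw [card_tuplesOfImageCard_zero, if_neg d.succ_ne_zero, Nat.cast_zero, zero_mul, zero_add,
    ← ENNReal.tsum_mul_left, ← ENNReal.tsum_mul_left, ← ENNReal.tsum_add]
  refine tsum_congr fun r => ?_
  rw [card_tuplesOfImageCard_succ_succ]
  push_cast
  ring

lemma imageCardSeries_eq_one (s : Finset α) {d : ℕ} (hd : d ≤ #s) : imageCardSeries s d = 1 := by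
  induction d with
  | zero => exact imageCardSeries_zero s
  | succ d ih =>
    refine ENNReal.eq_one_of_eq_mul_add (imageCardSeries_ne_top s _) ?_ ?_
      ((ih (by omega)).symm ▸ imageCardSeries_succ s d)
    · exact (ENNReal.natCast_mul_inv_lt_one (by omega)).ne
    · rw [mul_one, ← add_mul, ← Nat.cast_add, show d + 1 + (#s - d) = #s + 1 by omega]
      exact ENNReal.mul_inv_cancel (by simp) (by simp)

end Tuples

section Retrieval

variable {β : Type*} [DecidableEq β]

lemma image_univ_fin_val_subset (ω : ℕ → β) {r r' : ℕ} (hr : r ≤ r') :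
    univ.image (fun j : Fin r => ω j) ⊆ univ.image (fun j : Fin r' => ω j) := by
  intro x
  simp only [mem_image, mem_univ, true_and]
  rintro ⟨j, rfl⟩
  exact ⟨Fin.castLE hr j, rfl⟩

lemma monotone_exists_eq_or_le_card_image (ω : ℕ → β) (i : β) (k : ℕ) :
    Monotone fun r => (∃ j : Fin r, ω j = i) ∨ k ≤ #(univ.image fun j : Fin r => ω j) := by
  rintro r r' hr (⟨j, hj⟩ | hcard)
  · exact Or.inl ⟨Fin.castLE hr j, hj⟩
  · exact Or.inr (hcard.trans (card_le_card (image_univ_fin_val_subset ω hr)))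

lemma measure_not_exists_eq_or_le_card_image [Fintype β] [MeasurableSpace β]
    [MeasurableSingletonClass β] (μ : Measure (ℕ → β)) {r : ℕ} {c : ℝ≥0∞}
    (hμ : ∀ a : Fin r → β, μ {ω | ∀ j : Fin r, ω j = a j} = c) (i : β) (k : ℕ) :
    μ {ω | ¬ ((∃ j : Fin r, ω j = i) ∨ k ≤ #(univ.image fun j : Fin r => ω j))} =
      ∑ d ∈ range k, #(tuplesOfImageCard (univ.erase i) r d) * c := by
  have hevent :
      {ω : ℕ → β | ¬ ((∃ j : Fin r, ω j = i) ∨ k ≤ #(univ.image fun j : Fin r => ω j))} =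
        {ω | (fun j : Fin r => ω j) ∈
          ({a ∈ Fintype.piFinset fun _ => univ.erase i | #(univ.image a) < k} : Finset _)} := by
    ext ω
    simp
  rw [hevent, measure_setOf_prefix_mem μ hμ, card_filter_card_image_lt, Nat.cast_sum, sum_mul]

end Retrieval

/-- Fix `n/2 < k ≤ n` and let `X₁, X₂, …` be i.i.d. uniform on `[n]` (the coordinate process on
`[n]^ℕ` under the infinite uniform product measure `μ`, characterized by its values on cylinder
sets).  Fix `i ∈ [n]`, let `τ_i` be the least `r ≥ 1` with `X_r = i` and `W_k` the least
`r ≥ 1` with `|{X₁,…,X_r}| ≥ k`.  Then `E[min(τ_i, W_k)] = k` (the expected random-access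
sample size of a systematic `[n,k]` MDS code). -/
theorem systematic_mds_expected_retrieval_time (n k : ℕ) (hkn : k ≤ n) (hnk : n < 2 * k)
    (μ : Measure (ℕ → Fin n))
    (hμ : ∀ (m : ℕ) (a : Fin m → Fin n),
      μ {ω : ℕ → Fin n | ∀ i : Fin m, ω (i : ℕ) = a i} = ∏ _i : Fin m, ((n : ℝ≥0∞))⁻¹)
    (i : Fin n) :
    ∫⁻ ω, min (firstTime (fun r ω => ∃ j : Fin r, ω (j : ℕ) = i) ω)
        (firstTime
          (fun r ω => k ≤ ((Finset.univ : Finset (Fin r)).image (fun j => ω (j : ℕ))).card) ω)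
      ∂μ = (k : ℝ≥0∞) := by
  have hs : #(univ.erase i) + 1 = n := by simp [Nat.sub_add_cancel i.pos]
  have hq : (n : ℝ≥0∞)⁻¹ = ((#(univ.erase i) + 1 : ℕ) : ℝ≥0∞)⁻¹ := by rw [hs]
  rw [lintegral_congr fun ω => min_firstTime _ _ ω,
    lintegral_firstTime μ (fun ω => monotone_exists_eq_or_le_card_image ω i k)
      (fun _ => by simpa using (show k ≠ 0 by omega))
      fun r => measurableSet_setOf_prefix_mem
        {a : Fin r → Fin n | (∃ j, a j = i) ∨ k ≤ #(univ.image a)}]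
  simp_rw [measure_not_exists_eq_or_le_card_image μ (hμ _), Fin.prod_const, hq]
  rw [Summable.tsum_finsetSum fun _ _ => ENNReal.summable]
  calc ∑ d ∈ range k, imageCardSeries (univ.erase i) d
      = ∑ d ∈ range k, 1 := sum_congr rfl fun d hd =>
        imageCardSeries_eq_one _ (by rw [mem_range] at hd; omega)
    _ = k := by simp
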